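/- Let G be a locally compact Hausdorff groupoid with left Haar system. Then G is integrable if and only if for each z ∈ G⁰ there exists an open neighborhood U of z in G⁰ such that sup_{x∈U} λ^x(s⁻¹(U)) < ∞. -/

import Mathlib

open MeasureTheory Filter Topology ENNReal Classical

/-- A topological groupoid, given by range/source maps, a (total) partial-multiplication
`mul` (only meaningful on composable pairs, i.e. when `s γ = r α`) and inversion. -/
structure TopGroupoid (G : Type*) [TopologicalSpace G] where
  r : G → G
  s : G → G
  mul : G → G → G
  inv : G → G
  r_mul : ∀ γ α, s γ = r α → r (mul γ α) = r γ
  s_mul : ∀ γ α, s γ = r α → s (mul γ α) = s α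
  mul_assoc' : ∀ γ α β, s γ = r α → s α = r β → mul (mul γ α) β = mul γ (mul α β)
  r_inv : ∀ γ, r (inv γ) = s γ
  s_inv : ∀ γ, s (inv γ) = r γ
  inv_inv' : ∀ γ, inv (inv γ) = γ
  mul_inv' : ∀ γ, mul γ (inv γ) = r γ
  inv_mul' : ∀ γ, mul (inv γ) γ = s γ
  unit_mul : ∀ γ, mul (r γ) γ = γ
  mul_unit : ∀ γ, mul γ (s γ) = γ
  continuous_r : Continuous r
  continuous_s : Continuous s
  continuous_inv : Continuous inv
  continuous_mul : ContinuousOn (fun p : G × G => mul p.1 p.2) {p | s p.1 = r p.2}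

namespace TopGroupoid

variable {G : Type*} [TopologicalSpace G] (Gd : TopGroupoid G)

/-- The unit space `G⁰` of the groupoid. -/
def units : Set G := Set.range Gd.r

/-- The orbit `[z] = r(s⁻¹{z})` of a unit `z`. -/
def orbit (z : G) : Set G := Gd.r '' (Gd.s ⁻¹' {z})

/-- A groupoid is principal if `γ ↦ (r γ, s γ)` is injective. -/
def Principal : Prop := Function.Injective (fun γ => (Gd.r γ, Gd.s γ))

/-- Product of two subsets of the groupoid: all products of composable pairs. -/
def setMul (A B : Set G) : Set G :=
  {x | ∃ γ ∈ A, ∃ α ∈ B, Gd.s γ = Gd.r α ∧ x = Gd.mul γ α}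

/-- Powers of a subset with respect to `setMul`; `A ^ 1 = A`. -/
def setPow (A : Set G) : ℕ → Set G
  | 0 => Gd.units
  | n+1 => Gd.setMul A (setPow A n)

/-- A set `W ⊆ G` is conditionally compact if `WV` and `VW` are relatively compact
for every compact `V ⊆ G`. -/
def CondCompact (W : Set G) : Prop :=
  ∀ V : Set G, IsCompact V →
    IsCompact (closure (Gd.setMul W V)) ∧ IsCompact (closure (Gd.setMul V W))

/-- A sequence `x : ℕ → G` (in the unit space) converges `k`-times in `G⁰/G` to `z`. -/
def ConvergesKTimes (x : ℕ → G) (z : G) (k : ℕ) : Prop :=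
  ∃ γ : Fin k → ℕ → G,
    (∀ i n, Gd.s (γ i n) = x n) ∧
    (∀ i, Tendsto (fun n => Gd.r (γ i n)) atTop (𝓝 z)) ∧
    (∀ i j : Fin k, i < j →
      Tendsto (fun n => Gd.mul (γ j n) (Gd.inv (γ i n))) atTop (cocompact G))

end TopGroupoid

/-- A left Haar system on a topological groupoid: a family of Radon measures `λˣ`
with support `r⁻¹{x}`, continuous in `x`, and left invariant. -/
structure HaarSystem {G : Type*} [TopologicalSpace G] [MeasurableSpace G]
    (Gd : TopGroupoid G) where
  lam : G → Measure G
  regular : ∀ x, (lam x).Regular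
  supp_subset : ∀ x ∈ Gd.units, lam x {γ | Gd.r γ ≠ x} = 0
  supp_full : ∀ x ∈ Gd.units, ∀ U : Set G, IsOpen U →
      (U ∩ Gd.r ⁻¹' {x}).Nonempty → 0 < lam x U
  continuous_int : ∀ f : G → ℝ, Continuous f → HasCompactSupport f →
      Continuous fun x => ∫ γ, f γ ∂(lam x)
  left_invariant : ∀ γ : G, ∀ f : G → ℝ, Continuous f → HasCompactSupport f →
      ∫ α, f (Gd.mul γ α) ∂(lam (Gd.s γ)) = ∫ α, f α ∂(lam (Gd.r γ))

namespace HaarSystem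

variable {G : Type*} [TopologicalSpace G] [MeasurableSpace G]
  {Gd : TopGroupoid G} (HS : HaarSystem Gd)

/-- The associated right Haar system `λ_x(E) = λˣ(E⁻¹)`, supported on `s⁻¹{x}`. -/
noncomputable def rlam (x : G) : Measure G := (HS.lam x).map Gd.inv

/-- The groupoid (with its Haar system) is integrable if
`sup_{x ∈ N} λˣ(s⁻¹ N) < ∞` for every compact `N ⊆ G⁰`. -/
def Integrable : Prop :=
  ∀ N : Set G, N ⊆ Gd.units → IsCompact N →
    (⨆ x ∈ N, HS.lam x (Gd.s ⁻¹' N)) < ⊤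

/-- `G` fails to be integrable at `z` if `sup_{x ∈ U} λˣ(s⁻¹ U) = ∞` for every open
neighborhood `U` of `z` in `G⁰`. -/
def FailsIntegrableAt (z : G) : Prop :=
  ∀ U : Set G, IsOpen U → z ∈ U →
    (⨆ x ∈ U ∩ Gd.units, HS.lam x (Gd.s ⁻¹' (U ∩ Gd.units))) = ⊤

end HaarSystem

/-!
Left invariance gives `λ^{r γ}(s⁻¹ V) = λ^{s γ}(s⁻¹ V)` for open `V`. Hence for every unit
`x`, `λˣ(s⁻¹ V)` is bounded by `sup_{y ∈ V} λʸ(s⁻¹ V)` even when `x ∉ V`: either the measure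
vanishes, or some `γ ∈ Gˣ` has `s γ ∈ V`. A compact `N ⊆ G⁰` is covered by finitely many
neighbourhoods with finite supremum, and `λˣ(s⁻¹ N)` is at most the sum of these suprema.
-/

open Set

lemma MeasureTheory.Measure.measure_le_of_forall_ofReal_integral_le {X : Type*}
    [TopologicalSpace X] [RegularSpace X] [LocallyCompactSpace X] [MeasurableSpace X]
    [BorelSpace X] (μ : Measure X) [μ.Regular] {U : Set X} (hU : IsOpen U) {c : ℝ≥0∞}
    (h : ∀ f : X → ℝ, Continuous f → HasCompactSupport f → 0 ≤ f → f ≤ 1 → EqOn f 0 Uᶜ →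
      ENNReal.ofReal (∫ x, f x ∂μ) ≤ c) :
    μ U ≤ c := by
  rw [hU.measure_eq_iSup_isCompact]
  refine iSup₂_le fun K hKU => iSup_le fun hK => ?_
  obtain ⟨⟨f, hf⟩, hfK, hfU, hfc, hf01⟩ := exists_continuous_one_zero_of_isCompact hK
    hU.isClosed_compl (disjoint_compl_right_iff_subset.mpr hKU)
  calc μ K ≤ ENNReal.ofReal (∫ x, f x ∂μ) :=
        (hf.integrable_of_hasCompactSupport hfc).measure_le_integral
          (.of_forall fun x => (hf01 x).1) fun x hx => (hfK hx).ge
    _ ≤ c := h f hf hfc (fun x => (hf01 x).1) (fun x => (hf01 x).2) hfU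

namespace TopGroupoid

variable {G : Type*} [TopologicalSpace G] (Gd : TopGroupoid G)

lemma r_r (γ : G) : Gd.r (Gd.r γ) = Gd.r γ := by
  simpa only [Gd.mul_inv'] using Gd.r_mul γ (Gd.inv γ) (Gd.r_inv γ).symm

lemma s_mem_units (γ : G) : Gd.s γ ∈ Gd.units :=
  ⟨Gd.inv γ, Gd.r_inv γ⟩

lemma units_eq_setOf_r_eq : Gd.units = {x | Gd.r x = x} := by
  ext x
  constructor
  · rintro ⟨γ, rfl⟩
    exact Gd.r_r γ
  · exact fun hx => ⟨x, hx⟩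

lemma isClosed_units [T2Space G] : IsClosed Gd.units := by
  rw [units_eq_setOf_r_eq]
  exact isClosed_eq Gd.continuous_r continuous_id

lemma preimage_s_inter_units (V : Set G) : Gd.s ⁻¹' (V ∩ Gd.units) = Gd.s ⁻¹' V := by
  ext γ
  simp [Gd.s_mem_units γ]

end TopGroupoid

namespace HaarSystem

variable {G : Type*} [TopologicalSpace G] [MeasurableSpace G] {Gd : TopGroupoid G}
  (HS : HaarSystem Gd)

lemma iSup_lam_preimage_s_mono {A B : Set G} (hAB : A ⊆ B) :
    ⨆ x ∈ A, HS.lam x (Gd.s ⁻¹' A) ≤ ⨆ x ∈ B, HS.lam x (Gd.s ⁻¹' B) :=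
  iSup₂_le fun x hx =>
    (measure_mono (preimage_mono hAB)).trans (le_iSup₂ (f := fun x _ => HS.lam x _) x (hAB hx))

variable [RegularSpace G] [LocallyCompactSpace G] [BorelSpace G]

lemma lam_r_preimage_s_le (γ : G) {V : Set G} (hV : IsOpen V) :
    HS.lam (Gd.r γ) (Gd.s ⁻¹' V) ≤ HS.lam (Gd.s γ) (Gd.s ⁻¹' V) := by
  have := HS.regular (Gd.r γ)
  refine (HS.lam (Gd.r γ)).measure_le_of_forall_ofReal_integral_le
    (hV.preimage Gd.continuous_s) fun f hf hfc hf0 hf1 hfV => ?_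
  rw [← HS.left_invariant γ f hf hfc]
  -- off `r⁻¹{s γ}`, which is `λ^{s γ}`-null, `f (γ α) ≠ 0` forces `s α = s (γ α) ∈ V`
  calc ENNReal.ofReal (∫ α, f (Gd.mul γ α) ∂HS.lam (Gd.s γ))
      ≤ HS.lam (Gd.s γ) (Gd.s ⁻¹' V ∪ {α | Gd.r α ≠ Gd.s γ}) := by
        refine integral_le_measure (fun α _ => hf1 _) fun α hα => (hfV ?_).le
        simp only [mem_compl_iff, mem_union, mem_preimage, mem_ofPred_eq, not_or,
          not_not] at hα ⊢
        rw [Gd.s_mul γ α hα.2.symm]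
        exact hα.1
    _ ≤ HS.lam (Gd.s γ) (Gd.s ⁻¹' V) + HS.lam (Gd.s γ) {α | Gd.r α ≠ Gd.s γ} :=
        measure_union_le _ _
    _ = HS.lam (Gd.s γ) (Gd.s ⁻¹' V) := by
        rw [HS.supp_subset _ (Gd.s_mem_units γ), add_zero]

lemma lam_r_preimage_s_eq (γ : G) {V : Set G} (hV : IsOpen V) :
    HS.lam (Gd.r γ) (Gd.s ⁻¹' V) = HS.lam (Gd.s γ) (Gd.s ⁻¹' V) :=
  (HS.lam_r_preimage_s_le γ hV).antisymm <| by
    simpa only [Gd.r_inv, Gd.s_inv] using HS.lam_r_preimage_s_le (Gd.inv γ) hV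

lemma lam_preimage_s_le_iSup {x : G} (hx : x ∈ Gd.units) {V : Set G} (hV : IsOpen V) :
    HS.lam x (Gd.s ⁻¹' V) ≤ ⨆ y ∈ V ∩ Gd.units, HS.lam y (Gd.s ⁻¹' (V ∩ Gd.units)) := by
  rw [Gd.preimage_s_inter_units]
  rcases (Gd.s ⁻¹' V ∩ Gd.r ⁻¹' {x}).eq_empty_or_nonempty with hempty | ⟨γ, hγV, rfl⟩
  · have hnull : HS.lam x (Gd.s ⁻¹' V) = 0 :=
      measure_mono_null (fun γ hγV hγx => hempty.subset ⟨hγV, hγx⟩) (HS.supp_subset x hx)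
    simp [hnull]
  · rw [HS.lam_r_preimage_s_eq γ hV]
    exact le_iSup₂ (f := fun y _ => HS.lam y _) (Gd.s γ) ⟨hγV, Gd.s_mem_units γ⟩

lemma iSup_lam_preimage_s_le_sum {N : Set G} (hN : N ⊆ Gd.units) {ι : Type*} (t : Finset ι)
    {U : ι → Set G} (hU : ∀ i, IsOpen (U i)) (hNU : N ⊆ ⋃ i ∈ t, U i) :
    ⨆ x ∈ N, HS.lam x (Gd.s ⁻¹' N) ≤
      ∑ i ∈ t, ⨆ y ∈ U i ∩ Gd.units, HS.lam y (Gd.s ⁻¹' (U i ∩ Gd.units)) :=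
  iSup₂_le fun x hx => calc
    HS.lam x (Gd.s ⁻¹' N) ≤ HS.lam x (⋃ i ∈ t, Gd.s ⁻¹' U i) := by
      rw [← preimage_iUnion₂]
      exact measure_mono (preimage_mono hNU)
    _ ≤ ∑ i ∈ t, HS.lam x (Gd.s ⁻¹' U i) := measure_biUnion_finset_le t _
    _ ≤ _ := Finset.sum_le_sum fun i _ => HS.lam_preimage_s_le_iSup (hN hx) (hU i)

end HaarSystem

/-- `G` is integrable iff each unit `z` has an open neighborhood `U`
in `G⁰` with `sup_{x ∈ U} λˣ(s⁻¹ U) < ∞`. -/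
theorem stmt2 {G : Type*} [TopologicalSpace G] [T2Space G] [LocallyCompactSpace G]
    [MeasurableSpace G] [BorelSpace G]
    (Gd : TopGroupoid G) (HS : HaarSystem Gd) :
    HS.Integrable ↔
      ∀ z ∈ Gd.units, ∃ U : Set G, IsOpen U ∧ z ∈ U ∧
        (⨆ x ∈ U ∩ Gd.units, HS.lam x (Gd.s ⁻¹' (U ∩ Gd.units))) < ⊤ := by
  constructor
  · intro hInt z _
    obtain ⟨K, hK, hKz⟩ := exists_compact_mem_nhds z
    refine ⟨interior K, isOpen_interior, mem_interior_iff_mem_nhds.mpr hKz, ?_⟩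
    exact (HS.iSup_lam_preimage_s_mono (inter_subset_inter_left _ interior_subset)).trans_lt
      (hInt _ inter_subset_right (hK.inter_right Gd.isClosed_units))
  · intro h N hNu hN
    choose U hU hzU hUfin using h
    obtain ⟨t, hNt⟩ := hN.elim_finite_subcover (fun z : N => U z (hNu z.2))
      (fun z => hU z (hNu z.2)) fun x hx => mem_iUnion.mpr ⟨⟨x, hx⟩, hzU x (hNu hx)⟩
    exact (HS.iSup_lam_preimage_s_le_sum hNu t (fun z => hU z (hNu z.2)) hNt).trans_lt
      (ENNReal.sum_lt_top.mpr fun z _ => hUfin z (hNu z.2))
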